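/- arXiv:2107.08436 — 2 statements merged into one kernel-verified Lean document; each statement's English description precedes it below -/
import Mathlib

section
/- If h(t) = Σ_{n≥1} h_n t^n is a formal power series with h(0) = 0 whose coefficient sequence is a Pólya frequency sequence, then the Lagrange-type Riordan array R(1, h(t)) is totally positive. -/
open PowerSeries

noncomputable section

/-- An infinite real matrix is totally positive if every finite minor
(with strictly increasing row and column indices) is nonnegative. -/
def TotallyPos (M : ℕ → ℕ → ℝ) : Prop :=
  ∀ (k : ℕ) (r c : Fin k → ℕ), StrictMono r → StrictMono c →
    0 ≤ (Matrix.of fun i j => M (r i) (c j)).det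

/-- The Riordan array R(d(t), h(t)): entry (n,k) is the coefficient of t^n in d * h^k. -/
def riordan (d h : PowerSeries ℝ) (n k : ℕ) : ℝ :=
  PowerSeries.coeff n (d * h ^ k)

/-- The lower triangular Toeplitz matrix of a sequence. -/
def toeplitz (a : ℕ → ℝ) (i j : ℕ) : ℝ :=
  if j ≤ i then a (i - j) else 0

/-- The Hessenberg matrix: first column (d₀,d₁,…), and entry (i,j) = h_{i-j+1} for j ≥ 1. -/
def hess (d h : ℕ → ℝ) (i j : ℕ) : ℝ :=
  if j = 0 then d i else if j ≤ i + 1 then h (i + 1 - j) else 0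

/-! Column `k + 1` of `R(1, h)` is `T` times column `k`, where `T` is the lower triangular
Toeplitz matrix of `(hₙ)`. So a minor of `R` avoiding column `0` is a minor of a product of
finite sections of `T` and `R`, nonnegative by Cauchy–Binet once the minors of `R` with smaller
column indices are. Column `0` is `e₀`, so a minor using it either vanishes or, by Laplace
expansion, equals a minor avoiding it. Induction on the largest column index concludes. -/

open Finset Matrix

section Determinants

variable {R : Type*} [CommRing R]

theorem Matrix.det_mul_eq_sum_prod_mul_det_submatrix {m n : Type*} [Fintype m] [DecidableEq m]
    [Fintype n] (A : Matrix m n R) (B : Matrix n m R) :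
    (A * B).det = ∑ f : m → n, (∏ i, B (f i) i) * (A.submatrix id f).det := by
  simp only [det_apply', mul_apply, submatrix_apply, id_eq, prod_univ_sum,
    Fintype.piFinset_univ, mul_sum]
  rw [sum_comm]
  refine sum_congr rfl fun f _ => sum_congr rfl fun σ _ => ?_
  rw [prod_mul_distrib]
  ring

theorem Matrix.det_mul_eq_sum_injective_prod_mul_det_submatrix {m n : Type*} [Fintype m]
    [DecidableEq m] [Fintype n] [DecidableEq n] (A : Matrix m n R) (B : Matrix n m R) :
    (A * B).det = ∑ f with Function.Injective f, (∏ i, B (f i) i) * (A.submatrix id f).det := by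
  rw [det_mul_eq_sum_prod_mul_det_submatrix, ← sum_filter_add_sum_filter_not _ Function.Injective,
    add_eq_left]
  refine sum_eq_zero fun f hf => ?_
  obtain ⟨i, j, hij, hne⟩ := Function.not_injective_iff.mp (mem_filter.mp hf).2
  rw [det_zero_of_column_eq hne fun _ => by simp [hij], mul_zero]

open Classical in
theorem Finset.sum_injective_eq_sum_strictMono_sum_perm {ι M : Type*} [Fintype ι] [LinearOrder ι]
    [AddCommMonoid M] {k : ℕ} (g : (Fin k → ι) → M) :
    ∑ f with Function.Injective f, g f =
      ∑ s with StrictMono s, ∑ σ : Equiv.Perm (Fin k), g (s ∘ σ) := by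
  rw [← sum_product']
  symm
  refine sum_bij (fun p _ => p.1 ∘ p.2) ?_ ?_ ?_ fun _ _ => rfl
  · rintro ⟨s, σ⟩ hp
    simp only [mem_product, mem_filter, mem_univ, true_and, and_true] at hp ⊢
    exact hp.injective.comp σ.injective
  · rintro ⟨s₁, σ₁⟩ hp₁ ⟨s₂, σ₂⟩ hp₂ hco
    simp only [mem_product, mem_filter, mem_univ, true_and, and_true] at hp₁ hp₂
    have hrange : Set.range s₁ = Set.range s₂ := by
      rw [← σ₁.surjective.range_comp s₁, ← σ₂.surjective.range_comp s₂]
      exact congrArg Set.range hco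
    obtain rfl : s₁ = s₂ := (hp₁.range_inj hp₂).mp hrange
    obtain rfl : σ₁ = σ₂ := Equiv.ext fun i => hp₁.injective (congrFun hco i)
    rfl
  · intro f hf
    have hfi : Function.Injective f := (mem_filter.mp hf).2
    set S : Finset ι := univ.image f
    have hS : S.card = k := by simp [S, card_image_of_injective _ hfi]
    have hrange : Set.range f = S := by simp [S]
    refine ⟨⟨S.orderEmbOfFin hS, (Equiv.ofInjective f hfi).trans
      ((Equiv.setCongr hrange).trans (S.orderIsoOfFin hS).symm.toEquiv)⟩, ?_, ?_⟩
    · simpa using (S.orderEmbOfFin hS).strictMono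
    · funext j
      simp only [Function.comp_apply, ← coe_orderIsoOfFin_apply, Equiv.trans_apply]
      exact congrArg Subtype.val ((S.orderIsoOfFin hS).apply_symm_apply _)

open Classical in
theorem Matrix.det_mul_eq_sum_strictMono {ι : Type*} [Fintype ι] [LinearOrder ι] {k : ℕ}
    (A : Matrix (Fin k) ι R) (B : Matrix ι (Fin k) R) :
    (A * B).det = ∑ s with StrictMono s, (A.submatrix id s).det * (B.submatrix s id).det := by
  rw [det_mul_eq_sum_injective_prod_mul_det_submatrix, sum_injective_eq_sum_strictMono_sum_perm]
  refine sum_congr rfl fun s _ => ?_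
  rw [det_apply' (B.submatrix s id), mul_sum]
  refine sum_congr rfl fun σ _ => ?_
  rw [show A.submatrix id (s ∘ σ) = (A.submatrix id s).submatrix id σ from rfl, det_permute']
  simp only [Function.comp_apply, submatrix_apply, id_eq]
  ring

theorem Matrix.det_mul_nonneg_of_det_submatrix_nonneg [PartialOrder R] [IsOrderedRing R]
    {ι : Type*} [Fintype ι] [LinearOrder ι] {k : ℕ}
    {A : Matrix (Fin k) ι R} {B : Matrix ι (Fin k) R}
    (hA : ∀ s : Fin k → ι, StrictMono s → 0 ≤ (A.submatrix id s).det)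
    (hB : ∀ s : Fin k → ι, StrictMono s → 0 ≤ (B.submatrix s id).det) :
    0 ≤ (A * B).det := by
  classical
  rw [det_mul_eq_sum_strictMono]
  exact sum_nonneg fun s hs => mul_nonneg (hA s (mem_filter.mp hs).2) (hB s (mem_filter.mp hs).2)

theorem Matrix.det_succ_eq_mul_of_column_zero {k : ℕ}
    (A : Matrix (Fin (k + 1)) (Fin (k + 1)) R) (hA : ∀ i : Fin k, A i.succ 0 = 0) :
    A.det = A 0 0 * (A.submatrix Fin.succ Fin.succ).det := by
  rw [det_succ_column_zero, Fin.sum_univ_succ,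
    sum_eq_zero fun i _ => by rw [hA i, mul_zero, zero_mul]]
  simp

end Determinants

def minor (M : ℕ → ℕ → ℝ) {k : ℕ} (r c : Fin k → ℕ) : Matrix (Fin k) (Fin k) ℝ :=
  Matrix.of fun i j => M (r i) (c j)

theorem det_minor_sum_mul_nonneg {A B : ℕ → ℕ → ℝ} (hA : ∀ n m, n < m → A n m = 0)
    {k : ℕ} {r c : Fin k → ℕ}
    (hAr : ∀ s, StrictMono s → 0 ≤ (minor A r s).det)
    (hBc : ∀ s, StrictMono s → 0 ≤ (minor B s c).det) :
    0 ≤ (minor (fun n l => ∑ m ∈ range (n + 1), A n m * B m l) r c).det := by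
  set N := univ.sup r + 1
  have hfactor : minor (fun n l => ∑ m ∈ range (n + 1), A n m * B m l) r c =
      (of fun i (m : Fin N) => A (r i) m) * of fun (m : Fin N) j => B m (c j) := by
    ext i j
    simp only [minor, of_apply, mul_apply]
    rw [Fin.sum_univ_eq_sum_range (fun m => A (r i) m * B m (c j))]
    refine sum_subset (range_subset_range.mpr ?_) fun m _ hm => ?_
    · have := le_sup (f := r) (mem_univ i); omega
    · rw [hA _ _ (by simpa using hm), zero_mul]
  rw [hfactor]
  exact det_mul_nonneg_of_det_submatrix_nonneg (fun s hs => hAr _ (Fin.val_strictMono.comp hs))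
    (fun s hs => hBc _ (Fin.val_strictMono.comp hs))

theorem toeplitz_eq_zero_of_lt (a : ℕ → ℝ) {n m : ℕ} (h : n < m) : toeplitz a n m = 0 :=
  if_neg (Nat.not_le.mpr h)

theorem riordan_one_zero (h : PowerSeries ℝ) (n : ℕ) :
    riordan 1 h n 0 = if n = 0 then 1 else 0 := by
  simp [riordan, coeff_one]

theorem riordan_one_succ (h : PowerSeries ℝ) (n k : ℕ) :
    riordan 1 h n (k + 1) =
      ∑ m ∈ range (n + 1), toeplitz (fun i => coeff i h) n m * riordan 1 h m k := by
  simp only [riordan, one_mul, pow_succ, coeff_mul, Nat.sum_antidiagonal_eq_sum_range_succ_mk]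
  refine sum_congr rfl fun m hm => ?_
  rw [toeplitz, if_pos (Nat.lt_succ_iff.mp (mem_range.mp hm)), mul_comm]

theorem det_minor_nonneg_of_column_zero {M : ℕ → ℕ → ℝ}
    (hM : ∀ n, M n 0 = if n = 0 then 1 else 0) {k : ℕ} {r c : Fin (k + 1) → ℕ}
    (hr : StrictMono r) (hc0 : c 0 = 0)
    (hsub : 0 ≤ (minor M (r ∘ Fin.succ) (c ∘ Fin.succ)).det) :
    0 ≤ (minor M r c).det := by
  rw [minor, det_succ_eq_mul_of_column_zero _ fun i => ?_]
  · refine mul_nonneg ?_ hsub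
    simp only [of_apply, hc0, hM]
    split_ifs <;> norm_num
  · simp only [of_apply, hc0, hM]
    exact if_neg (hr (Fin.succ_pos i)).ne_bot

theorem det_minor_riordan_one_nonneg_of_pos {h : PowerSeries ℝ}
    (hPF : TotallyPos (toeplitz (fun n => coeff n h))) {K : ℕ}
    (hK : ∀ k (r c : Fin k → ℕ), StrictMono r → StrictMono c → (∀ j, c j < K) →
      0 ≤ (minor (riordan 1 h) r c).det)
    {k : ℕ} {r c : Fin k → ℕ} (hr : StrictMono r) (hc : StrictMono c) (hc0 : ∀ j, 0 < c j)
    (hcK : ∀ j, c j < K + 1) :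
    0 ≤ (minor (riordan 1 h) r c).det := by
  have hprod : minor (riordan 1 h) r c =
      minor (fun n l => ∑ m ∈ range (n + 1), toeplitz (fun i => coeff i h) n m * riordan 1 h m l)
        r (fun j => c j - 1) := by
    ext i j
    simp only [minor, of_apply, ← riordan_one_succ, Nat.sub_add_cancel (hc0 j)]
  rw [hprod]
  refine det_minor_sum_mul_nonneg (fun _ _ => toeplitz_eq_zero_of_lt _)
    (fun s hs => hPF k r s hr hs) (fun s hs => hK k s _ hs (fun i j hij => ?_) fun j => ?_)
  · have := hc hij
    have := hc0 i
    omega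
  · have := hcK j
    have := hc0 j
    omega

theorem stmt7_general (h : PowerSeries ℝ)
    (hPF : TotallyPos (toeplitz (fun n => coeff n h))) :
    TotallyPos (riordan 1 h) := by
  suffices ∀ K k (r c : Fin k → ℕ), StrictMono r → StrictMono c → (∀ j, c j < K) →
      0 ≤ (minor (riordan 1 h) r c).det from fun k r c hr hc =>
    this _ k r c hr hc fun j => Nat.lt_succ_of_le (le_sup (mem_univ j))
  intro K
  induction K with
  | zero =>
    rintro (_ | k) r c - - hc
    · simp
    · exact absurd (hc 0) (Nat.not_lt_zero _)
  | succ K ih =>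
    rintro (_ | k) r c hr hc hcK
    · simp
    rcases Nat.eq_zero_or_pos (c 0) with hc0 | hc0
    · exact det_minor_nonneg_of_column_zero (riordan_one_zero h) hr hc0
        (det_minor_riordan_one_nonneg_of_pos hPF ih (hr.comp Fin.strictMono_succ)
          (hc.comp Fin.strictMono_succ) (fun j => hc0 ▸ hc (Fin.succ_pos j)) fun j => hcK _)
    · exact det_minor_riordan_one_nonneg_of_pos hPF ih hr hc
        (fun j => hc0.trans_le (hc.monotone (Fin.zero_le j))) hcK

theorem stmt7 (h : PowerSeries ℝ) (h0 : constantCoeff h = 0)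
    (hPF : TotallyPos (toeplitz (fun n => coeff n h))) :
    TotallyPos (riordan 1 h) :=
  stmt7_general h hPF
end
end

section
/- For the generating functions 𝔏_k(t) = Σ_{n≥0} L_{n,k} t^n of the columns of the Lucas matrix, 𝔏_0(t) = (2−t)/(1−t) and 𝔏_k(t) = (t²/(1−t))·𝔏_{k−1}(t) for k ≥ 1. -/
open PowerSeries

noncomputable section

/-- Lucas polynomials: L₀ = 2, L₁ = 1, L_{n+2} = L_{n+1} + x·L_n. -/
def lucas : ℕ → Polynomial ℝ
  | 0 => 2
  | 1 => 1
  | n + 2 => lucas (n + 1) + Polynomial.X * lucas n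

/-! Comparing the coefficients of `x^(k+1)` in `L_{n+2} = L_{n+1} + x L_n` gives
`(1 - t) 𝔏_{k+1} = t² 𝔏_k`, and `1 - t` is invertible with inverse `∑ tⁿ`. -/

lemma lucas_coeff_zero : ∀ n, (lucas n).coeff 0 = if n = 0 then 2 else 1
  | 0 => by simp [lucas]
  | 1 => by simp [lucas]
  | n + 2 => by simp [lucas, Polynomial.mul_coeff_zero, lucas_coeff_zero (n + 1)]

lemma lucas_coeff_succ_zero (k : ℕ) : (lucas 0).coeff (k + 1) = 0 := by
  simp [lucas, ← Polynomial.C_ofNat]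

lemma lucas_coeff_succ_one (k : ℕ) : (lucas 1).coeff (k + 1) = 0 := by
  simp [lucas, Polynomial.coeff_one]

lemma lucas_coeff_succ_succ (n k : ℕ) :
    (lucas (n + 2)).coeff (k + 1) = (lucas (n + 1)).coeff (k + 1) + (lucas n).coeff k := by
  simp [lucas, Polynomial.coeff_X_mul]

/-- The generating function `𝔏_k` of the `k`-th column of the Lucas matrix. -/
def lucasColumn (k : ℕ) : PowerSeries ℝ :=
  mk fun n => (lucas n).coeff k

lemma one_sub_X_mul_lucasColumn_succ (k : ℕ) :
    (1 - X) * lucasColumn (k + 1) = X ^ 2 * lucasColumn k := by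
  ext n
  rw [sub_mul, one_mul, map_sub, coeff_X_pow_mul']
  rcases n with _ | _ | n
  · simp [lucasColumn, lucas_coeff_succ_zero]
  · simp [lucasColumn, coeff_succ_X_mul, lucas_coeff_succ_zero, lucas_coeff_succ_one]
  · simp [lucasColumn, coeff_succ_X_mul, lucas_coeff_succ_succ]

lemma mk_ite_le_one_eq_X_sq_mul_mk_one (R : Type*) [Semiring R] :
    (mk fun n => if n ≤ 1 then (0 : R) else 1) = X ^ 2 * mk 1 := by
  ext n
  rw [coeff_X_pow_mul', coeff_mk]
  split_ifs <;> first | rfl | omega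

theorem stmt16 :
    (PowerSeries.mk (fun n => (lucas n).coeff 0) =
      PowerSeries.mk (fun n => if n = 0 then (2 : ℝ) else 1)) ∧
    (∀ k : ℕ, 1 ≤ k →
      PowerSeries.mk (fun n => (lucas n).coeff k) =
        PowerSeries.mk (fun n => if n ≤ 1 then (0 : ℝ) else 1) *
          PowerSeries.mk (fun n => (lucas n).coeff (k - 1))) := by
  refine ⟨by ext n; simp [lucas_coeff_zero], fun k hk => ?_⟩
  obtain ⟨j, rfl⟩ : ∃ j, k = j + 1 := ⟨k - 1, by omega⟩
  change lucasColumn (j + 1) = _ * lucasColumn j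
  calc lucasColumn (j + 1)
      = mk 1 * ((1 - X) * lucasColumn (j + 1)) := by
        rw [← mul_assoc, mk_one_mul_one_sub_eq_one, one_mul]
    _ = _ := by
        rw [one_sub_X_mul_lucasColumn_succ, mk_ite_le_one_eq_X_sq_mul_mk_one, mul_comm (X ^ 2)]
        ring
end
end
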